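/- arXiv:1006.0999 — 4 statements merged into one kernel-verified Lean document; each statement's English description precedes it below -/
import Mathlib

section
/- In a braided monoidal category, for an object V and any object M, define Y_M = β_{M,V} ∘ β_{V,M} : V ⊗ M → V ⊗ M and σ_M = β_{V,V} ⊗ id_M : V ⊗ V ⊗ M → V ⊗ V ⊗ M. Then σ_M ∘ (id_V ⊗ Y_M) ∘ σ_M = β_{(V⊗M),V} ∘ β_{V,(V⊗M)} as endomorphisms of V ⊗ V ⊗ M (up to associators). Equivalently, σ Y_1 σ = Y_2 where Y_1 = id_V ⊗ Y_M and Y_2 is the double braiding of V past V ⊗ M. -/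
open CategoryTheory MonoidalCategory

/-- Affine braid relation `σ ∘ (id_V ⊗ Y_M) ∘ σ = Y'`, where `Y_M` is the double braiding of
`V` around `M`, `σ` braids the two copies of `V`, and `Y'` is the double braiding of `V`
around `V ⊗ M`; all maps are endomorphisms of `V ⊗ (V ⊗ M)` (reassociated via associators). -/
theorem affine_braid_sigma_Y_sigma {C : Type*} [Category C] [MonoidalCategory C]
    [BraidedCategory C] (V M : C) :
    letI σ : V ⊗ (V ⊗ M) ⟶ V ⊗ (V ⊗ M) :=
      (α_ V V M).inv ≫ ((β_ V V).hom ▷ M) ≫ (α_ V V M).hom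
    letI Y₁ : V ⊗ (V ⊗ M) ⟶ V ⊗ (V ⊗ M) := V ◁ ((β_ V M).hom ≫ (β_ M V).hom)
    letI Y₂ : V ⊗ (V ⊗ M) ⟶ V ⊗ (V ⊗ M) := (β_ V (V ⊗ M)).hom ≫ (β_ (V ⊗ M) V).hom
    σ ≫ Y₁ ≫ σ = Y₂ := by
  simp only [BraidedCategory.braiding_tensor_right_hom, BraidedCategory.braiding_tensor_left_hom,
    Category.assoc, Iso.inv_hom_id_assoc, Iso.hom_inv_id_assoc,
    MonoidalCategory.whiskerLeft_comp]
end

section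
/- In a braided monoidal category, for objects V and M, the endomorphisms Y_1 = id_V ⊗ (β_{M,V} ∘ β_{V,M}) and Y_2 = β_{(V⊗M),V} ∘ β_{V,(V⊗M)} of V ⊗ V ⊗ M commute: Y_1 ∘ Y_2 = Y_2 ∘ Y_1. -/
open CategoryTheory MonoidalCategory

/-- The Jucys–Murphy type operators `Y₁ = id_V ⊗ (β_{M,V} ∘ β_{V,M})` and
`Y₂ = β_{(V⊗M),V} ∘ β_{V,(V⊗M)}` on `V ⊗ (V ⊗ M)` commute. -/
theorem jucys_murphy_commute {C : Type*} [Category C] [MonoidalCategory C]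
    [BraidedCategory C] (V M : C) :
    letI Y₁ : V ⊗ (V ⊗ M) ⟶ V ⊗ (V ⊗ M) := V ◁ ((β_ V M).hom ≫ (β_ M V).hom)
    letI Y₂ : V ⊗ (V ⊗ M) ⟶ V ⊗ (V ⊗ M) := (β_ V (V ⊗ M)).hom ≫ (β_ (V ⊗ M) V).hom
    Y₁ ≫ Y₂ = Y₂ ≫ Y₁ := by
  rw [← Category.assoc, BraidedCategory.braiding_naturality_right, Category.assoc,
    BraidedCategory.braiding_naturality_left, Category.assoc]
end

section
/- In a braided monoidal category, for objects V and M, the endomorphisms σ = β_{V,V} ⊗ id_M, Y_1 = id_V ⊗ (β_{M,V} ∘ β_{V,M}), and Y_2 = β_{(V⊗M),V} ∘ β_{V,(V⊗M)} of V ⊗ V ⊗ M satisfy σ ∘ Y_1 ∘ Y_2 = Y_2 ∘ Y_1 ∘ σ. -/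
open CategoryTheory MonoidalCategory

/-- Affine braid group relation `σ ∘ Y₁ ∘ Y₂ = Y₂ ∘ Y₁ ∘ σ` (composition applying the
rightmost map first), as endomorphisms of `V ⊗ (V ⊗ M)`. -/
theorem affine_braid_sigma_Y1_Y2 {C : Type*} [Category C] [MonoidalCategory C]
    [BraidedCategory C] (V M : C) :
    letI σ : V ⊗ (V ⊗ M) ⟶ V ⊗ (V ⊗ M) :=
      (α_ V V M).inv ≫ ((β_ V V).hom ▷ M) ≫ (α_ V V M).hom
    letI Y₁ : V ⊗ (V ⊗ M) ⟶ V ⊗ (V ⊗ M) := V ◁ ((β_ V M).hom ≫ (β_ M V).hom)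
    letI Y₂ : V ⊗ (V ⊗ M) ⟶ V ⊗ (V ⊗ M) := (β_ V (V ⊗ M)).hom ≫ (β_ (V ⊗ M) V).hom
    Y₂ ≫ Y₁ ≫ σ = σ ≫ Y₁ ≫ Y₂ := by
  simp [BraidedCategory.hexagon_forward, BraidedCategory.hexagon_reverse]
end

section
/- Let T be the group of bijections of ℤ generated by translation d : m ↦ m+1 and the transpositions t_i swapping i−1 and i (i ∈ ℤ), acting diagonally on ℤ^n. Two vectors ν, ν' ∈ ℤ^n lie in the same T-orbit if and only if for all indices i, j: ν_i = ν_j ⟺ ν'_i = ν'_j. -/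
open Equiv Subgroup

private def Sgen : Set (Equiv.Perm ℤ) :=
  {Equiv.addRight (1 : ℤ)} ∪ Set.range fun i : ℤ => Equiv.swap (i - 1) i

private lemma adj_mem (a : ℤ) : Equiv.swap a (a + 1) ∈ Subgroup.closure Sgen := by
  apply Subgroup.subset_closure
  exact Or.inr ⟨a + 1, by norm_num⟩

private lemma swap_mem (a b : ℤ) : Equiv.swap a b ∈ Subgroup.closure Sgen := by
  suffices h : ∀ k : ℕ, ∀ a b : ℤ, b - a = k → Equiv.swap a b ∈ Subgroup.closure Sgen by
    rcases le_total a b with hab | hab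
    · exact h (b - a).toNat a b (by omega)
    · rw [Equiv.swap_comm]; exact h (a - b).toNat b a (by omega)
  intro k
  induction k with
  | zero =>
    intro a b hab
    have : a = b := by omega
    subst this
    rw [Equiv.swap_self]
    exact one_mem _
  | succ k ih =>
    intro a b hab
    rcases Nat.eq_zero_or_pos k with hk | hk
    · subst hk
      have : b = a + 1 := by omega
      subst this
      exact adj_mem a
    · set c := b - 1 with hc
      have hac : Equiv.swap a c ∈ Subgroup.closure Sgen := ih a c (by omega)
      have hcb : Equiv.swap c b ∈ Subgroup.closure Sgen := by
        have := adj_mem c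
        have hb : c + 1 = b := by omega
        rwa [hb] at this
      have hne1 : a ≠ c := by omega
      have hne2 : a ≠ b := by omega
      have key : Equiv.swap a b = Equiv.swap c b * Equiv.swap a c * (Equiv.swap c b)⁻¹ := by
        rw [← Equiv.swap_apply_apply]
        congr 1
        · exact (Equiv.swap_apply_of_ne_of_ne hne1 hne2).symm
        · exact (Equiv.swap_apply_left c b).symm
      rw [key]
      exact mul_mem (mul_mem hcb hac) (inv_mem hcb)

private lemma exists_perm : ∀ (n : ℕ) (ν ν' : Fin n → ℤ),
    (∀ i j, ν i = ν j ↔ ν' i = ν' j) →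
    ∃ t ∈ Subgroup.closure Sgen, ∀ k, t (ν k) = ν' k := by
  intro n
  induction n with
  | zero => exact fun ν ν' _ => ⟨1, one_mem _, fun k => k.elim0⟩
  | succ n ih =>
    intro ν ν' h
    obtain ⟨t, ht, htapp⟩ := ih (ν ∘ Fin.castSucc) (ν' ∘ Fin.castSucc)
      (fun i j => h i.castSucc j.castSucc)
    by_cases hlast : ∃ k : Fin n, ν k.castSucc = ν (Fin.last n)
    · obtain ⟨k, hk⟩ := hlast
      refine ⟨t, ht, fun m => ?_⟩
      rcases Fin.eq_castSucc_or_eq_last m with ⟨i, rfl⟩ | rfl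
      · exact htapp i
      · rw [← hk]
        have := htapp k
        simp only [Function.comp_apply] at this
        rw [this, (h k.castSucc (Fin.last n)).mp hk]
    · push_neg at hlast
      set a := t (ν (Fin.last n)) with ha
      set b := ν' (Fin.last n) with hb
      refine ⟨Equiv.swap a b * t, mul_mem (swap_mem a b) ht, fun m => ?_⟩
      rcases Fin.eq_castSucc_or_eq_last m with ⟨i, rfl⟩ | rfl
      swap
      · simp [ha, hb]
      · have h1 : t (ν i.castSucc) = ν' i.castSucc := htapp i
        have hne_b : ν' i.castSucc ≠ b := fun hcon =>
          hlast i ((h i.castSucc (Fin.last n)).mpr hcon)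
        have hne_a : ν' i.castSucc ≠ a := by
          rw [← h1, ha]
          intro hcon
          exact hlast i (t.injective hcon)
        simp only [Equiv.Perm.mul_apply, h1]
        exact Equiv.swap_apply_of_ne_of_ne hne_a hne_b

/-- Two vectors `ν, ν' ∈ ℤⁿ` lie in the same orbit of the group `T` generated by the
translation `d : m ↦ m+1` and the transpositions `t_i = (i−1, i)` (acting diagonally)
if and only if they have the same equality pattern of coordinates. -/
theorem same_T_orbit_iff_same_equality_pattern (n : ℕ) (ν ν' : Fin n → ℤ) :
    (∃ t ∈ Subgroup.closure
        ({Equiv.addRight (1 : ℤ)} ∪ Set.range fun i : ℤ => Equiv.swap (i - 1) i),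
      (fun k => t (ν k)) = ν') ↔
      ∀ i j, ν i = ν j ↔ ν' i = ν' j := by
  constructor
  · rintro ⟨t, _, rfl⟩ i j
    exact ⟨fun h => by simp [h], fun h => t.injective h⟩
  · intro h
    obtain ⟨t, ht, htapp⟩ := exists_perm n ν ν' h
    exact ⟨t, ht, funext htapp⟩
end
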